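/- Anti self-duality norm of the Cayley 4-form: with Q := φ⁰∧φ¹∧ψ⁰∧ψ¹ + φ⁰∧φ²∧ψ⁰∧ψ² + φ⁰∧φ³∧ψ⁰∧ψ³ − φ¹∧φ²∧ψ¹∧ψ² − φ¹∧φ³∧ψ¹∧ψ³ − φ²∧φ³∧ψ²∧ψ³ − 2·φ⁰∧ψ¹∧ψ²∧ψ³ + 2·φ¹∧φ²∧φ³∧ψ⁰ in the degree-4 part of Λ, one has Q ∧ Q = −14·φ⁰∧φ¹∧φ²∧φ³∧ψ⁰∧ψ¹∧ψ²∧ψ³. (Together with the anti self-duality of Q this expresses η(Q,Q) = 14 for the induced pairing, the key computation behind the fact that the conformal stabilizer of the Cayley form is ℂ*·Spin(7).) -/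
import Mathlib


noncomputable section

/-- `Λ`, the exterior algebra over `ℂ` of an 8-dimensional complex vector space with fixed
basis vectors `φ⁰, φ¹, φ², φ³, ψ⁰, ψ¹, ψ², ψ³` (indexed `0,…,7`). -/
abbrev Lam8 := ExteriorAlgebra ℂ (Fin 8 → ℂ)

/-- The images in `Λ` of the 8 fixed basis vectors:
`bv 0,…,bv 3` are `φ⁰,…,φ³` and `bv 4,…,bv 7` are `ψ⁰,…,ψ³`. -/
def bv (i : Fin 8) : Lam8 := ExteriorAlgebra.ι ℂ (Pi.single i 1)


lemma bv_sq (i : Fin 8) : bv i * bv i = 0 := ExteriorAlgebra.ι_sq_zero _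

lemma bv_swap (i j : Fin 8) : bv j * bv i = -(bv i * bv j) := by
  have := ExteriorAlgebra.ι_add_mul_swap (R := ℂ)
    ((Pi.single i 1 : Fin 8 → ℂ)) ((Pi.single j 1 : Fin 8 → ℂ))
  unfold bv; rw [eq_neg_iff_add_eq_zero, add_comm]; exact this

lemma bv_sq' (i : Fin 8) (x : Lam8) : bv i * (bv i * x) = 0 := by
  rw [← mul_assoc, bv_sq, zero_mul]

lemma bv_swap' (i j : Fin 8) (x : Lam8) : bv j * (bv i * x) = -(bv i * (bv j * x)) := by
  rw [← mul_assoc, bv_swap i j, neg_mul, mul_assoc]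

/-- The Cayley 4-form as an element of `Λ⁴`:
`Q = φ⁰∧φ¹∧ψ⁰∧ψ¹ + φ⁰∧φ²∧ψ⁰∧ψ² + φ⁰∧φ³∧ψ⁰∧ψ³ − φ¹∧φ²∧ψ¹∧ψ² − φ¹∧φ³∧ψ¹∧ψ³
 − φ²∧φ³∧ψ²∧ψ³ − 2·φ⁰∧ψ¹∧ψ²∧ψ³ + 2·φ¹∧φ²∧φ³∧ψ⁰`. -/
def cayleyQ : Lam8 :=
  bv 0 * bv 1 * bv 4 * bv 5 + bv 0 * bv 2 * bv 4 * bv 6 + bv 0 * bv 3 * bv 4 * bv 7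
    - bv 1 * bv 2 * bv 5 * bv 6 - bv 1 * bv 3 * bv 5 * bv 7 - bv 2 * bv 3 * bv 6 * bv 7
    - (2 : ℂ) • (bv 0 * bv 5 * bv 6 * bv 7) + (2 : ℂ) • (bv 1 * bv 2 * bv 3 * bv 4)

set_option maxHeartbeats 2000000 in
/-- **Anti self-duality norm of the Cayley 4-form**:
`Q ∧ Q = −14·φ⁰∧φ¹∧φ²∧φ³∧ψ⁰∧ψ¹∧ψ²∧ψ³`. -/
theorem cayley_wedge_square :
    cayleyQ * cayleyQ
      = (-14 : ℂ) • (bv 0 * bv 1 * bv 2 * bv 3 * bv 4 * bv 5 * bv 6 * bv 7) := by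
  simp only [cayleyQ, mul_assoc, mul_add, add_mul, mul_sub, sub_mul, mul_neg, neg_mul,
    smul_mul_assoc, mul_smul_comm, neg_neg, smul_neg, bv_sq, bv_sq', bv_swap 0 1, bv_swap' 0 1, bv_swap 0 2, bv_swap' 0 2, bv_swap 0 3, bv_swap' 0 3, bv_swap 0 4, bv_swap' 0 4, bv_swap 0 5, bv_swap' 0 5, bv_swap 0 6, bv_swap' 0 6, bv_swap 0 7, bv_swap' 0 7, bv_swap 1 2, bv_swap' 1 2, bv_swap 1 3, bv_swap' 1 3, bv_swap 1 4, bv_swap' 1 4, bv_swap 1 5, bv_swap' 1 5, bv_swap 1 6, bv_swap' 1 6, bv_swap 1 7, bv_swap' 1 7, bv_swap 2 3, bv_swap' 2 3, bv_swap 2 4, bv_swap' 2 4, bv_swap 2 5, bv_swap' 2 5, bv_swap 2 6, bv_swap' 2 6, bv_swap 2 7, bv_swap' 2 7, bv_swap 3 4, bv_swap' 3 4, bv_swap 3 5, bv_swap' 3 5, bv_swap 3 6, bv_swap' 3 6, bv_swap 3 7, bv_swap' 3 7, bv_swap 4 5, bv_swap' 4 5, bv_swap 4 6, bv_swap' 4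 6, bv_swap 4 7, bv_swap' 4 7, bv_swap 5 6, bv_swap' 5 6, bv_swap 5 7, bv_swap' 5 7, bv_swap 6 7, bv_swap' 6 7,
    mul_zero, zero_mul, smul_zero, neg_zero, add_zero, zero_add, sub_zero, zero_sub]
  module

end
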